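/- Let R be a commutative ring and q₁, q₂, q₃, q₄ ∈ R². Form the 6×8 matrix M over R whose rows, written in 1×2 blocks, are (q₂ᵀ, −q₁ᵀ, 0, 0), (q₃ᵀ, 0, −q₁ᵀ, 0), (q₄ᵀ, 0, 0, −q₁ᵀ), (0, q₃ᵀ, −q₂ᵀ, 0), (0, q₄ᵀ, 0, −q₂ᵀ), (0, 0, q₄ᵀ, −q₃ᵀ). Then every 6×6 minor of M vanishes: for every choice of 6 of the 8 columns, the determinant of the resulting 6×6 submatrix is zero. (In particular, over a field M has rank at most 5.) -/
import Mathlib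


open Matrix

/-- The six pairs `(i,j)` with `i < j` among `{0,1,2,3}`, indexing the rows. -/
def rowPairs : Fin 6 → Fin 4 × Fin 4 := ![(0,1), (0,2), (0,3), (1,2), (1,3), (2,3)]

/-- The 6×8 coefficient matrix of the linearised system: the row indexed by the pair
`(a,b)` has block `a` equal to `q_bᵀ`, block `b` equal to `−q_aᵀ`, and zero blocks
elsewhere.  Columns are indexed by `Fin 4 × Fin 2` (block, position). -/
def linM (R : Type*) [CommRing R] (q : Fin 4 → Fin 2 → R) :
    Matrix (Fin 6) (Fin 4 × Fin 2) R :=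
  Matrix.of fun r c =>
    if c.1 = (rowPairs r).1 then q (rowPairs r).2 c.2
    else if c.1 = (rowPairs r).2 then - q (rowPairs r).1 c.2
    else 0

/-- The 2×2 determinant `det(q_a, q_b)`. -/
def dd {R : Type*} [CommRing R] (q : Fin 4 → Fin 2 → R) (a b : Fin 4) : R :=
  q a 0 * q b 1 - q a 1 * q b 0

/-- The coefficients of the universal linear dependence between the rows of `linM`. -/
def lamv {R : Type*} [CommRing R] (q : Fin 4 → Fin 2 → R) : Fin 6 → R :=
  ![dd q 2 3, -dd q 1 3, dd q 1 2, dd q 0 3, -dd q 0 2, dd q 0 1]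

set_option maxHeartbeats 1000000 in
/-- The rows of `linM` satisfy the universal linear dependence with coefficients `lamv`. -/
lemma lam_rel {R : Type*} [CommRing R] (q : Fin 4 → Fin 2 → R) (j : Fin 4 × Fin 2) :
    ∑ r, lamv q r * linM R q r j = 0 := by
  obtain ⟨a, b⟩ := j
  fin_cases a <;> fin_cases b <;>
    · simp only [Fin.sum_univ_succ, Finset.sum_empty, Finset.univ_eq_empty, linM, rowPairs,
        lamv, dd, Matrix.of_apply, Matrix.cons_val_zero, Matrix.cons_val_succ, Fin.succ,
        Fin.isValue, Fin.mk_one, Fin.reduceEq, if_true, if_false, Fin.reduceFinMk]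
      norm_num [Fin.ext_iff, show ((3:Fin 4):ℕ) = 3 from rfl, show ((2:Fin 4):ℕ) = 2 from rfl,
        show ((1:Fin 4):ℕ) = 1 from rfl, show ((0:Fin 4):ℕ) = 0 from rfl]
      ring

/-- The universal polynomial case: over `ℤ[x_{ik}]` every 6×6 minor vanishes. -/
lemma det_zero_poly (s : Fin 6 ↪ Fin 4 × Fin 2) :
    (((linM (MvPolynomial (Fin 4 × Fin 2) ℤ) (fun i k => MvPolynomial.X (i, k))).submatrix
        id s).det) = 0 := by
  set q : Fin 4 → Fin 2 → MvPolynomial (Fin 4 × Fin 2) ℤ := fun i k => MvPolynomial.X (i, k)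
    with hq
  rw [← Matrix.exists_vecMul_eq_zero_iff]
  refine ⟨lamv q, ?_, ?_⟩
  · intro h
    have h0 : lamv q 0 = 0 := by rw [h]; rfl
    have := congrArg (MvPolynomial.eval
      (fun p : Fin 4 × Fin 2 => if p = ((2 : Fin 4), (0 : Fin 2)) ∨
        p = ((3 : Fin 4), (1 : Fin 2)) then (1 : ℤ) else 0)) h0
    simp [lamv, dd, hq, Prod.ext_iff] at this
  · funext c
    simpa [Matrix.vecMul, dotProduct] using lam_rel q (s c)

/-- Every 6×6 minor of the 6×8 linearised coefficient matrix vanishes. -/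
theorem stmt12 (R : Type*) [CommRing R] (q : Fin 4 → Fin 2 → R)
    (s : Fin 6 ↪ Fin 4 × Fin 2) :
    ((linM R q).submatrix id s).det = 0 := by
  set φ : MvPolynomial (Fin 4 × Fin 2) ℤ →+* R :=
    MvPolynomial.eval₂Hom (Int.castRingHom R) (fun p => q p.1 p.2) with hφ
  have hmap : (linM R q).submatrix id s =
      φ.mapMatrix (((linM (MvPolynomial (Fin 4 × Fin 2) ℤ)
        (fun i k => MvPolynomial.X (i, k))).submatrix id s)) := by
    ext r c
    simp only [Matrix.submatrix_apply, RingHom.mapMatrix_apply, Matrix.map_apply, linM,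
      Matrix.of_apply, id]
    split_ifs <;> simp [hφ]
  rw [hmap, ← RingHom.map_det, det_zero_poly, map_zero]
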